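/- arXiv:1408.0900 — 2 statements merged into one kernel-verified Lean document; each statement's English description precedes it below -/
import Mathlib

section
/- Let K be a complete non-archimedean valued field, f : U → K^m analytic on an open set U ⊆ K^l × K^m with f(a,b) = 0, and suppose the m×m matrix A_y of partial derivatives of f with respect to the last m variables at (a,b) is invertible. Then there exist open neighborhoods U_1 ∋ a, U_2 ∋ b and a unique analytic map g : U_1 → U_2 with g(a) = b, f(x, g(x)) = 0 for all x ∈ U_1, and Dg(x) = −A_y(x,g(x))^{−1}·A_x(x,g(x)) on U_1. -/
/-!
Near `(a, b)` the map `v ↦ (f v, v.1)` has invertible derivative, so it is a local homeomorphism,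
and the implicit function is `x ↦ (its local inverse at (0, x)).2`. Over a complete field the
local inverse of an analytic map is analytic, because the formal inverse of its power series
converges. Differentiating `f (x, g x) = 0` gives `A_x + A_y ∘ Dg = 0`, and `A_y` stays
invertible near `(a, b)` since invertible operators form an open set.
-/

/-- The block of the total derivative of `f` corresponding to the first `l` variables. -/
noncomputable def blockAx {K : Type*} [NontriviallyNormedField K] {l m : ℕ}
    (f : (Fin l → K) × (Fin m → K) → (Fin m → K))
    (z : (Fin l → K) × (Fin m → K)) : (Fin l → K) →L[K] (Fin m → K) :=
  (fderiv K f z).comp (ContinuousLinearMap.inl K (Fin l → K) (Fin m → K))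

/-- The block of the total derivative of `f` corresponding to the last `m` variables. -/
noncomputable def blockAy {K : Type*} [NontriviallyNormedField K] {l m : ℕ}
    (f : (Fin l → K) × (Fin m → K) → (Fin m → K))
    (z : (Fin l → K) × (Fin m → K)) : (Fin m → K) →L[K] (Fin m → K) :=
  (fderiv K f z).comp (ContinuousLinearMap.inr K (Fin l → K) (Fin m → K))

open Filter Topology ContinuousLinearMap

section
variable {𝕜 : Type*} [NontriviallyNormedField 𝕜]
  {E₁ : Type*} [NormedAddCommGroup E₁] [NormedSpace 𝕜 E₁]
  {E₂ : Type*} [NormedAddCommGroup E₂] [NormedSpace 𝕜 E₂]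
  {F : Type*} [NormedAddCommGroup F] [NormedSpace 𝕜 F]

theorem fderiv_eq_neg_inverse_comp_of_eventually_apply_eq {f : E₁ × E₂ → F} {g : E₁ → E₂}
    {x : E₁} {c : F} (hf : DifferentiableAt 𝕜 f (x, g x)) (hg : DifferentiableAt 𝕜 g x)
    (hfg : ∀ᶠ x' in 𝓝 x, f (x', g x') = c)
    (hinv : (fderiv 𝕜 f (x, g x) ∘L inr 𝕜 E₁ E₂).IsInvertible) :
    fderiv 𝕜 g x =
      -(fderiv 𝕜 f (x, g x) ∘L inr 𝕜 E₁ E₂).inverse ∘L (fderiv 𝕜 f (x, g x) ∘L inl 𝕜 E₁ E₂) := by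
  set L := fderiv 𝕜 f (x, g x)
  have hchain : HasFDerivAt (fun x' => f (x', g x'))
      (L ∘L (ContinuousLinearMap.id 𝕜 E₁).prod (fderiv 𝕜 g x)) x :=
    hf.hasFDerivAt.comp x ((hasFDerivAt_id x).prodMk hg.hasFDerivAt)
  have hzero : L ∘L (ContinuousLinearMap.id 𝕜 E₁).prod (fderiv 𝕜 g x) = 0 :=
    hchain.unique ((hasFDerivAt_const c x).congr_of_eventuallyEq hfg)
  have hsplit : L ∘L inl 𝕜 E₁ E₂ + (L ∘L inr 𝕜 E₁ E₂) ∘L fderiv 𝕜 g x = 0 := by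
    ext1 v
    exact (L.comp_inl_add_comp_inr (v, fderiv 𝕜 g x v)).trans congr($hzero v)
  calc fderiv 𝕜 g x
      = (L ∘L inr 𝕜 E₁ E₂).inverse ∘L ((L ∘L inr 𝕜 E₁ E₂) ∘L fderiv 𝕜 g x) := by
        rw [← comp_assoc, hinv.inverse_comp_self, id_comp]
    _ = _ := by rw [eq_neg_of_add_eq_zero_right hsplit, comp_neg]

theorem ImplicitFunctionData.analyticAt_implicitFunction [CompleteSpace E₁] [CompleteSpace E₂]
    [CompleteSpace F] (φ : ImplicitFunctionData 𝕜 E₁ E₂ F) (hl : AnalyticAt 𝕜 φ.leftFun φ.pt)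
    (hr : AnalyticAt 𝕜 φ.rightFun φ.pt) :
    AnalyticAt 𝕜 (Function.uncurry φ.implicitFunction) (φ.prodFun φ.pt) :=
  φ.toOpenPartialHomeomorph.analyticAt_symm' φ.pt_mem_toOpenPartialHomeomorph_source
    (hl.prod hr) φ.hasStrictFDerivAt.hasFDerivAt.fderiv

theorem AnalyticAt.eventually_isInvertible_fderiv_comp_inr [CompleteSpace E₂] [CompleteSpace F]
    {f : E₁ × E₂ → F} {u : E₁ × E₂}
    (hf : AnalyticAt 𝕜 f u) (hinv : (fderiv 𝕜 f u ∘L inr 𝕜 E₁ E₂).IsInvertible) :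
    ∀ᶠ v in 𝓝 u, (fderiv 𝕜 f v ∘L inr 𝕜 E₁ E₂).IsInvertible :=
  (hf.fderiv.continuousAt.clm_comp continuousAt_const).eventually_mem
    (ContinuousLinearEquiv.isOpen.mem_nhds hinv)

variable [CompleteSpace E₁] [CompleteSpace E₂] [CompleteSpace F]

theorem HasStrictFDerivAt.analyticAt_implicitFunctionOfProdDomain
    {f : E₁ × E₂ → F} {f'u : E₁ × E₂ →L[𝕜] F} {u : E₁ × E₂}
    (dfu : HasStrictFDerivAt f f'u u) (if₂u : (f'u ∘L inr 𝕜 E₁ E₂).IsInvertible)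
    (hf : AnalyticAt 𝕜 f u) :
    AnalyticAt 𝕜 (dfu.implicitFunctionOfProdDomain if₂u) u.1 := by
  set φ := dfu.implicitFunctionDataOfProdDomain if₂u
  have hφ : AnalyticAt 𝕜 (Function.uncurry φ.implicitFunction) (f u, u.1) :=
    φ.analyticAt_implicitFunction hf analyticAt_fst
  exact analyticAt_snd.comp (hφ.comp (f := fun x : E₁ => (f u, x))
    (analyticAt_const.prod analyticAt_id))

theorem AnalyticAt.exists_implicitFunction {f : E₁ × E₂ → F} {a : E₁} {b : E₂}
    (hf : AnalyticAt 𝕜 f (a, b)) (hinv : (fderiv 𝕜 f (a, b) ∘L inr 𝕜 E₁ E₂).IsInvertible) :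
    ∃ (U₁ : Set E₁) (U₂ : Set E₂), IsOpen U₁ ∧ IsOpen U₂ ∧ a ∈ U₁ ∧ b ∈ U₂ ∧
      ∃ g : E₁ → E₂, AnalyticOnNhd 𝕜 g U₁ ∧ g a = b ∧
        (∀ x ∈ U₁, g x ∈ U₂ ∧ f (x, g x) = f (a, b)) ∧
        (∀ x ∈ U₁, ∀ y ∈ U₂, f (x, y) = f (a, b) → y = g x) ∧
        (∀ x ∈ U₁, fderiv 𝕜 g x = -(fderiv 𝕜 f (x, g x) ∘L inr 𝕜 E₁ E₂).inverse ∘L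
          (fderiv 𝕜 f (x, g x) ∘L inl 𝕜 E₁ E₂)) := by
  have dfu := hf.hasStrictFDerivAt
  set g := dfu.implicitFunctionOfProdDomain hinv
  obtain ⟨P, Q, hP, haP, hQ, hbQ, hPQ⟩ := mem_nhds_prod_iff'.1
    ((dfu.eventually_apply_eq_iff_implicitFunctionOfProdDomain hinv).and
      (hf.eventually_analyticAt.and (hf.eventually_isInvertible_fderiv_comp_inr hinv)))
  have hga : g a = b := (hPQ ⟨haP, hbQ⟩).1.1 rfl
  obtain ⟨U₁, hU₁, hU₁open, haU₁⟩ := eventually_nhds_iff.1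
    (((dfu.analyticAt_implicitFunctionOfProdDomain hinv hf).eventually_analyticAt.and
      ((dfu.tendsto_implicitFunctionOfProdDomain hinv).eventually_mem (hQ.mem_nhds hbQ))).and
      (hP.mem_nhds haP))
  have hbox : ∀ x ∈ U₁, ∀ y ∈ Q, (f (x, y) = f (a, b) ↔ g x = y) ∧ AnalyticAt 𝕜 f (x, y) ∧
      (fderiv 𝕜 f (x, y) ∘L inr 𝕜 E₁ E₂).IsInvertible :=
    fun x hx y hy => hPQ ⟨(hU₁ x hx).2, hy⟩
  have hsol : ∀ x ∈ U₁, g x ∈ Q ∧ f (x, g x) = f (a, b) := fun x hx =>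
    ⟨(hU₁ x hx).1.2, (hbox x hx _ (hU₁ x hx).1.2).1.2 rfl⟩
  refine ⟨U₁, Q, hU₁open, hQ, haU₁, hbQ, g, fun x hx => (hU₁ x hx).1.1, hga, hsol,
    fun x hx y hy hfy => ((hbox x hx y hy).1.1 hfy).symm, fun x hx => ?_⟩
  obtain ⟨-, hfx, hinvx⟩ := hbox x hx _ (hU₁ x hx).1.2
  exact fderiv_eq_neg_inverse_comp_of_eventually_apply_eq hfx.differentiableAt
    (hU₁ x hx).1.1.differentiableAt
    (eventually_of_mem (hU₁open.mem_nhds hx) fun x' hx' => (hsol x' hx').2) hinvx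

end

theorem padic_implicit_function_theorem_general (K : Type*) [NontriviallyNormedField K]
    [CompleteSpace K]
    (l m : ℕ) (f : (Fin l → K) × (Fin m → K) → (Fin m → K))
    (U : Set ((Fin l → K) × (Fin m → K)))
    (hf : AnalyticOnNhd K f U)
    (a : Fin l → K) (b : Fin m → K) (hab : (a, b) ∈ U) (hfab : f (a, b) = 0)
    (hAy : IsUnit (blockAy f (a, b))) :
    ∃ (U₁ : Set (Fin l → K)) (U₂ : Set (Fin m → K)), IsOpen U₁ ∧ IsOpen U₂ ∧
      a ∈ U₁ ∧ b ∈ U₂ ∧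
      ∃ g : (Fin l → K) → (Fin m → K),
        AnalyticOnNhd K g U₁ ∧ g a = b ∧
        (∀ x ∈ U₁, g x ∈ U₂ ∧ f (x, g x) = 0) ∧
        (∀ x ∈ U₁, ∀ y ∈ U₂, f (x, y) = 0 → y = g x) ∧
        (∀ x ∈ U₁, fderiv K g x =
          -(Ring.inverse (blockAy f (x, g x))).comp (blockAx f (x, g x))) ∧
        (∀ g' : (Fin l → K) → (Fin m → K), AnalyticOnNhd K g' U₁ → g' a = b →
          (∀ x ∈ U₁, g' x ∈ U₂ ∧ f (x, g' x) = 0) → Set.EqOn g g' U₁) := by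
  obtain ⟨Ay, hAy⟩ := hAy
  obtain ⟨U₁, U₂, hU₁, hU₂, ha, hb, g, hg, hga, hsol, huniq, hderiv⟩ :=
    (hf _ hab).exists_implicitFunction ⟨ContinuousLinearEquiv.unitsEquiv K _ Ay, hAy⟩
  rw [hfab] at hsol huniq
  refine ⟨U₁, U₂, hU₁, hU₂, ha, hb, g, hg, hga, hsol, huniq, ?_, ?_⟩
  · simpa only [blockAx, blockAy, ringInverse_eq_inverse] using hderiv
  · intro g' _ _ hg' x hx
    exact (huniq x hx (g' x) (hg' x hx).1 (hg' x hx).2).symm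

/-- p-adic implicit function theorem: if `f` is analytic near `(a,b)`, `f(a,b) = 0` and
`A_y(a,b)` is invertible, there are neighborhoods `U₁ ∋ a`, `U₂ ∋ b` and a unique analytic
`g : U₁ → U₂` with `g(a) = b`, `f(x, g(x)) = 0`, and `Dg = −A_y⁻¹ A_x`. -/
theorem padic_implicit_function_theorem (K : Type*) [NontriviallyNormedField K]
    [CompleteSpace K] (hna : ∀ a b : K, ‖a + b‖ ≤ max ‖a‖ ‖b‖)
    (l m : ℕ) (f : (Fin l → K) × (Fin m → K) → (Fin m → K))
    (U : Set ((Fin l → K) × (Fin m → K))) (hU : IsOpen U)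
    (hf : AnalyticOnNhd K f U)
    (a : Fin l → K) (b : Fin m → K) (hab : (a, b) ∈ U) (hfab : f (a, b) = 0)
    (hAy : IsUnit (blockAy f (a, b))) :
    ∃ (U₁ : Set (Fin l → K)) (U₂ : Set (Fin m → K)), IsOpen U₁ ∧ IsOpen U₂ ∧
      a ∈ U₁ ∧ b ∈ U₂ ∧
      ∃ g : (Fin l → K) → (Fin m → K),
        AnalyticOnNhd K g U₁ ∧ g a = b ∧
        (∀ x ∈ U₁, g x ∈ U₂ ∧ f (x, g x) = 0) ∧
        (∀ x ∈ U₁, ∀ y ∈ U₂, f (x, y) = 0 → y = g x) ∧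
        (∀ x ∈ U₁, fderiv K g x =
          -(Ring.inverse (blockAy f (x, g x))).comp (blockAx f (x, g x))) ∧
        (∀ g' : (Fin l → K) → (Fin m → K), AnalyticOnNhd K g' U₁ → g' a = b →
          (∀ x ∈ U₁, g' x ∈ U₂ ∧ f (x, g' x) = 0) → Set.EqOn g g' U₁) :=
  padic_implicit_function_theorem_general K l m f U hf a b hab hfab hAy
end

section
/- (Multivariate analytic Hensel's lemma) Let f = (f_1,...,f_t) with each f_i ∈ Z_p{X_1,...,X_t} a restricted power series, let J_f denote the Jacobian matrix, and let r ≥ 0 be an integer. If a ∈ Z_p^t satisfies det J_f(a) ≠ 0 and v_p(f_i(a)) > 2·v_p(det J_f(a)) + r for all i, then there exists a unique b ∈ Z_p^t with f(b) = 0 and v_p(b_i − a_i) > v_p(det J_f(a)) + r for all i. -/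
/-- Evaluation of a multivariate (restricted) power series at a point of `ℤ_pᵗ`. -/
noncomputable def mvSeriesEval (p : ℕ) [Fact p.Prime] {t : ℕ}
    (f : MvPowerSeries (Fin t) ℤ_[p]) (x : Fin t → ℤ_[p]) : ℤ_[p] :=
  ∑' d : (Fin t →₀ ℕ), MvPowerSeries.coeff d f * ∏ i, x i ^ d i

/-- Formal partial derivative of a multivariate power series. -/
noncomputable def mvSeriesPDeriv (p : ℕ) [Fact p.Prime] {t : ℕ} (j : Fin t)
    (f : MvPowerSeries (Fin t) ℤ_[p]) : MvPowerSeries (Fin t) ℤ_[p] :=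
  fun d => ((d j + 1 : ℕ) : ℤ_[p]) *
    MvPowerSeries.coeff (d + Finsupp.single j 1) f

/-!
Newton's method in `ℤ_pᵗ`. Every restricted power series `g` satisfies the Taylor estimate
`‖g x - g y - Dg(a) (x - y)‖ ≤ max ‖x - a‖ ‖y - a‖ * ‖x - y‖`: for polynomials this follows by
induction from the Leibniz rule and the ultrametric inequality, and it passes to `g` term by term.
Hence `x ↦ x - J⁻¹ f(x)`, with `J = J_f(a)` and `‖J⁻¹‖ ≤ ‖det J‖⁻¹` by the adjugate formula, is a
contraction of ratio `p^(-r-1)` on the closed ball of radius `‖det J‖ p^(-r-1)` around `a` and maps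
it to itself; Banach's fixed point theorem gives the unique zero. Since norms in `ℤ_p` are powers
of `p`, that closed ball is the open ball of radius `‖det J‖ p^(-r)` in the statement.
-/

open Filter Topology Metric IsUltrametricDist NNReal Matrix

namespace Matrix

variable {R n : Type*} [CommRing R] [Fintype n] [DecidableEq n]

theorem adjugate_mulVec_mulVec (J : Matrix n n R) (v : n → R) :
    J.adjugate *ᵥ (J *ᵥ v) = J.det • v := by
  rw [mulVec_mulVec, adjugate_mul, smul_mulVec, one_mulVec]

theorem adjugate_mulVec_eq_zero_iff [IsDomain R] {J : Matrix n n R} (hJ : J.det ≠ 0)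
    {v : n → R} : J.adjugate *ᵥ v = 0 ↔ v = 0 := by
  refine ⟨fun h => ?_, fun h => by rw [h, mulVec_zero]⟩
  have := congrArg (J *ᵥ ·) h
  rwa [← cramer_eq_adjugate_mulVec, mulVec_cramer, mulVec_zero, smul_eq_zero,
    or_iff_right hJ] at this

end Matrix

namespace PadicInt

variable {p : ℕ} [Fact p.Prime]

theorem norm_mul_le_left (x y : ℤ_[p]) : ‖x * y‖ ≤ ‖x‖ := by
  rw [norm_mul]
  exact mul_le_of_le_one_right (norm_nonneg x) (norm_le_one y)

theorem norm_mul_le_right (x y : ℤ_[p]) : ‖x * y‖ ≤ ‖y‖ := by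
  rw [norm_mul]
  exact mul_le_of_le_one_left (norm_nonneg y) (norm_le_one x)

theorem norm_lt_norm_mul_zpow_iff {x y : ℤ_[p]} (hy : y ≠ 0) (k : ℤ) :
    ‖x‖ < ‖y‖ * (p : ℝ) ^ k ↔ ‖x‖ ≤ ‖y‖ * (p : ℝ) ^ (k - 1) := by
  have hp : (p : ℝ) ≠ 0 := Nat.cast_ne_zero.2 (Fact.out : p.Prime).ne_zero
  rw [norm_eq_zpow_neg_valuation hy, ← zpow_add₀ hp, ← zpow_add₀ hp,
    norm_lt_pow_iff_norm_le_pow_sub_one, add_sub_assoc]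

theorem norm_mulVec_le {m n : Type*} [Fintype m] [Fintype n] (M : Matrix m n ℤ_[p])
    (v : n → ℤ_[p]) : ‖M *ᵥ v‖ ≤ ‖v‖ :=
  (pi_norm_le_iff_of_nonneg (norm_nonneg v)).2 fun _ =>
    norm_sum_le_of_forall_le_of_nonneg (norm_nonneg v) fun j _ =>
      (norm_mul_le_right _ _).trans (norm_le_pi_norm v j)

end PadicInt

namespace MvPolynomial

variable {p : ℕ} [Fact p.Prime] {σ : Type*} [Fintype σ]

theorem norm_eval_sub_eval_le (P : MvPolynomial σ ℤ_[p]) (x y : σ → ℤ_[p]) :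
    ‖eval x P - eval y P‖ ≤ ‖x - y‖ := by
  induction P using MvPolynomial.induction_on with
  | C c => simp
  | add P Q hP hQ =>
    rw [map_add, map_add, add_sub_add_comm]
    exact (norm_add_le_max _ _).trans (max_le hP hQ)
  | mul_X P n hP =>
    rw [eval_mul, eval_mul, eval_X, eval_X,
      show eval x P * x n - eval y P * y n
        = (eval x P - eval y P) * x n + eval y P * (x n - y n) by ring]
    exact (norm_add_le_max _ _).trans (max_le ((PadicInt.norm_mul_le_left _ _).trans hP)
      ((PadicInt.norm_mul_le_right _ _).trans (norm_le_pi_norm (x - y) n)))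

theorem sum_eval_pderiv_mul_X_mul [DecidableEq σ] (P : MvPolynomial σ ℤ_[p]) (n : σ)
    (a w : σ → ℤ_[p]) :
    ∑ j, eval a (pderiv j (P * X n)) * w j
      = a n * ∑ j, eval a (pderiv j P) * w j + eval a P * w n := by
  simp only [Derivation.leibniz, pderiv_X, smul_eq_mul, map_add, map_mul, eval_X, add_mul,
    Finset.sum_add_distrib, Finset.mul_sum]
  simp [Pi.single_apply, mul_comm, mul_left_comm, add_comm]

theorem norm_eval_sub_eval_sub_sum_pderiv_le (P : MvPolynomial σ ℤ_[p]) (a x y : σ → ℤ_[p]) :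
    ‖eval x P - eval y P - ∑ j, eval a (pderiv j P) * (x j - y j)‖
      ≤ max ‖x - a‖ ‖y - a‖ * ‖x - y‖ := by
  classical
  induction P using MvPolynomial.induction_on with
  | C c => simp; positivity
  | add P Q hP hQ =>
    rw [show eval x (P + Q) - eval y (P + Q) - ∑ j, eval a (pderiv j (P + Q)) * (x j - y j)
        = (eval x P - eval y P - ∑ j, eval a (pderiv j P) * (x j - y j))
          + (eval x Q - eval y Q - ∑ j, eval a (pderiv j Q) * (x j - y j)) by
      simp only [map_add, add_mul, Finset.sum_add_distrib]; ring]
    exact (norm_add_le_max _ _).trans (max_le hP hQ)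
  | mul_X P n hP =>
    rw [sum_eval_pderiv_mul_X_mul, eval_mul, eval_mul, eval_X, eval_X,
      show eval x P * x n - eval y P * y n
          - (a n * ∑ j, eval a (pderiv j P) * (x j - y j) + eval a P * (x n - y n))
        = a n * (eval x P - eval y P - ∑ j, eval a (pderiv j P) * (x j - y j))
          + ((x n - a n) * (eval x P - eval y P) + (x n - y n) * (eval y P - eval a P)) by
      ring]
    have hxa : ‖x n - a n‖ ≤ ‖x - a‖ := norm_le_pi_norm (x - a) n
    have hxy : ‖x n - y n‖ ≤ ‖x - y‖ := norm_le_pi_norm (x - y) n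
    refine (norm_add_le_max _ _).trans (max_le ((PadicInt.norm_mul_le_right _ _).trans hP)
      ((norm_add_le_max _ _).trans (max_le ?_ ?_))) <;> rw [norm_mul]
    · exact mul_le_mul (hxa.trans (le_max_left _ _)) (norm_eval_sub_eval_le P x y)
        (norm_nonneg _) (by positivity)
    · rw [mul_comm]
      exact mul_le_mul ((norm_eval_sub_eval_le P y a).trans (le_max_right _ _)) hxy
        (norm_nonneg _) (by positivity)

end MvPolynomial

section RestrictedSeries

open MvPowerSeries MvPolynomial

variable {p : ℕ} [Fact p.Prime]

theorem summable_coeff_mul {σ : Type*} {g : MvPowerSeries σ ℤ_[p]}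
    (hg : Tendsto (fun d => ‖coeff d g‖) cofinite (𝓝 0)) (v : (σ →₀ ℕ) → ℤ_[p]) :
    Summable fun d => coeff d g * v d :=
  NonarchimedeanAddGroup.summable_of_tendsto_cofinite_zero
    (squeeze_zero_norm (fun _ => PadicInt.norm_mul_le_left _ _) hg)

variable {t : ℕ}

theorem coeff_mvSeriesPDeriv (g : MvPowerSeries (Fin t) ℤ_[p]) (j : Fin t) (d : Fin t →₀ ℕ) :
    coeff d (mvSeriesPDeriv p j g) = ((d j + 1 : ℕ) : ℤ_[p]) * coeff (d + Finsupp.single j 1) g :=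
  rfl

theorem mvSeriesEval_eq_tsum (g : MvPowerSeries (Fin t) ℤ_[p]) (x : Fin t → ℤ_[p]) :
    mvSeriesEval p g x = ∑' d, coeff d g * eval x (monomial d 1) := by
  simp [mvSeriesEval, eval_monomial, Finsupp.prod_fintype]

theorem mvSeriesEval_mvSeriesPDeriv (g : MvPowerSeries (Fin t) ℤ_[p]) (j : Fin t)
    (a : Fin t → ℤ_[p]) :
    mvSeriesEval p (mvSeriesPDeriv p j g) a
      = ∑' d, coeff d g * eval a (pderiv j (monomial d 1)) := by
  have hsupp : (Function.support fun d => coeff d g * eval a (pderiv j (monomial d 1)))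
      ⊆ Set.range (· + Finsupp.single j 1) := by
    intro d hd
    have hdj : d j ≠ 0 := fun h => hd (by simp [h])
    exact ⟨d - Finsupp.single j 1, tsub_add_cancel_of_le (by simpa [Nat.one_le_iff_ne_zero])⟩
  rw [← (add_left_injective (Finsupp.single j 1)).tsum_eq hsupp]
  refine tsum_congr fun d => ?_
  simp [coeff_mvSeriesPDeriv, eval_monomial, Finsupp.prod_fintype]
  ring

theorem norm_mvSeriesEval_sub_sub_sum_le {g : MvPowerSeries (Fin t) ℤ_[p]}
    (hg : Tendsto (fun d => ‖coeff d g‖) cofinite (𝓝 0)) (a x y : Fin t → ℤ_[p]) :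
    ‖mvSeriesEval p g x - mvSeriesEval p g y
        - ∑ j, mvSeriesEval p (mvSeriesPDeriv p j g) a * (x j - y j)‖
      ≤ max ‖x - a‖ ‖y - a‖ * ‖x - y‖ := by
  have hlin : ∑ j, mvSeriesEval p (mvSeriesPDeriv p j g) a * (x j - y j)
      = ∑' d, coeff d g * ∑ j, eval a (pderiv j (monomial d 1)) * (x j - y j) := by
    simp_rw [Finset.mul_sum, ← mul_assoc]
    rw [Summable.tsum_finsetSum fun j _ => ?_]
    · refine Finset.sum_congr rfl fun j _ => ?_
      rw [mvSeriesEval_mvSeriesPDeriv, (summable_coeff_mul hg _).tsum_mul_right]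
    · simpa only [mul_assoc] using summable_coeff_mul hg _
  rw [hlin, mvSeriesEval_eq_tsum, mvSeriesEval_eq_tsum,
    ← (summable_coeff_mul hg _).tsum_sub (summable_coeff_mul hg _),
    ← ((summable_coeff_mul hg _).sub (summable_coeff_mul hg _)).tsum_sub
      (summable_coeff_mul hg _)]
  refine norm_tsum_le_of_forall_le_of_nonneg (by positivity) fun d => ?_
  rw [← mul_sub, ← mul_sub]
  exact (PadicInt.norm_mul_le_right _ _).trans (norm_eval_sub_eval_sub_sum_pderiv_le _ a x y)

theorem norm_mvSeriesEval_sub_sub_mulVec_le {f : Fin t → MvPowerSeries (Fin t) ℤ_[p]}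
    (hf : ∀ i, Tendsto (fun d => ‖coeff d (f i)‖) cofinite (𝓝 0))
    (a x y : Fin t → ℤ_[p]) :
    ‖(fun i => mvSeriesEval p (f i) x) - (fun i => mvSeriesEval p (f i) y)
        - (Matrix.of fun i j => mvSeriesEval p (mvSeriesPDeriv p j (f i)) a) *ᵥ (x - y)‖
      ≤ max ‖x - a‖ ‖y - a‖ * ‖x - y‖ :=
  (pi_norm_le_iff_of_nonneg (by positivity)).2 fun i =>
    norm_mvSeriesEval_sub_sub_sum_le (hf i) a x y

end RestrictedSeries

theorem exists_unique_zero_mem_closedBall_of_norm_sub_sub_le {V : Type*}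
    [NormedAddCommGroup V] [IsUltrametricDist V] [CompleteSpace V] (G : V → V) (c : V)
    {ε : ℝ} {K : ℝ≥0} (hK : K < 1)
    (hG : ∀ x ∈ closedBall c ε, ∀ y ∈ closedBall c ε, ‖G x - G y - (x - y)‖ ≤ K * ‖x - y‖)
    (hGc : ‖G c‖ ≤ ε) :
    ∃! x, x ∈ closedBall c ε ∧ G x = 0 := by
  have hc : c ∈ closedBall c ε := mem_closedBall_self ((norm_nonneg _).trans hGc)
  set Φ : V → V := fun x => x - G x
  have hmaps : Set.MapsTo Φ (closedBall c ε) (closedBall c ε) := by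
    intro x hx
    rw [mem_closedBall, dist_eq_norm] at hx ⊢
    rw [show Φ x - c = -((G x - G c - (x - c)) + G c) by simp only [Φ]; abel, norm_neg]
    refine (norm_add_le_max _ _).trans (max_le ?_ hGc)
    calc ‖G x - G c - (x - c)‖ ≤ K * ‖x - c‖ := hG x (by simpa [dist_eq_norm]) c hc
      _ ≤ ‖x - c‖ := mul_le_of_le_one_left (norm_nonneg _) (mod_cast hK.le)
      _ ≤ ε := hx
  have hcontr : ContractingWith K (hmaps.restrict Φ _ _) := by
    refine ⟨hK, LipschitzWith.of_dist_le_mul fun x y => ?_⟩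
    rw [Subtype.dist_eq, Subtype.dist_eq, dist_eq_norm, dist_eq_norm,
      Set.MapsTo.val_restrict_apply, Set.MapsTo.val_restrict_apply,
      show Φ x - Φ y = -(G x - G y - (x - y)) by simp only [Φ]; abel, norm_neg]
    exact hG x x.2 y y.2
  obtain ⟨x, hx, hfix, -⟩ := hcontr.exists_fixedPoint' isClosed_closedBall.isComplete hmaps hc
    (edist_ne_top _ _)
  refine ⟨x, ⟨hx, sub_eq_self.1 hfix⟩, fun y ⟨hy, hGy⟩ => ?_⟩
  have h := hG y hy x hx
  rw [hGy, sub_eq_self.1 hfix, sub_self, zero_sub, norm_neg] at h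
  have : ‖y - x‖ = 0 := by nlinarith [norm_nonneg (y - x), show (K : ℝ) < 1 from hK]
  exact sub_eq_zero.1 (norm_eq_zero.1 this)

namespace PadicInt

variable {p : ℕ} [Fact p.Prime] {n : Type*} [Fintype n]

theorem exists_eq_coe_of_mem_closedBall {a : n → ℤ_[p]} {ε : ℝ} (hε : ε ≤ 1) {x : n → ℚ_[p]}
    (hx : x ∈ closedBall (fun i => (a i : ℚ_[p])) ε) :
    ∃ z ∈ closedBall a ε, (fun i => (z i : ℚ_[p])) = x := by
  rw [mem_closedBall, dist_eq_norm] at hx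
  have hint : ∀ i, ‖x i‖ ≤ 1 := fun i => by
    rw [← sub_add_cancel (x i) (a i)]
    exact (norm_add_le_max _ _).trans
      (max_le ((norm_le_pi_norm (x - fun i => (a i : ℚ_[p])) i).trans (hx.trans hε))
        (norm_le_one (a i)))
  let z : n → ℤ_[p] := fun i => ⟨x i, hint i⟩
  exact ⟨z, mem_closedBall.2 ((dist_eq_norm z a).trans_le hx), rfl⟩

theorem exists_unique_zero_mem_closedBall_of_norm_sub_sub_coe_le
    (G : (n → ℤ_[p]) → n → ℚ_[p]) (a : n → ℤ_[p]) {ε : ℝ} (hε : ε ≤ 1) {K : ℝ≥0} (hK : K < 1)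
    (hG : ∀ z ∈ closedBall a ε, ∀ w ∈ closedBall a ε,
      ‖G z - G w - fun i => ((z - w) i : ℚ_[p])‖ ≤ K * ‖z - w‖)
    (hGa : ‖G a‖ ≤ ε) :
    ∃! b, b ∈ closedBall a ε ∧ G b = 0 := by
  let ι : (n → ℤ_[p]) → n → ℚ_[p] := fun z i => z i
  have hι : Function.Injective ι := fun z w h => funext fun i => Subtype.ext (congrFun h i)
  -- The values of the extension off the image of `ℤ_pⁿ` are never used.
  have hGι : ∀ z, Function.extend ι G 0 (ι z) = G z := hι.extend_apply _ _
  obtain ⟨x, ⟨hx, hGx⟩, huniq⟩ :=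
    exists_unique_zero_mem_closedBall_of_norm_sub_sub_le (Function.extend ι G 0) (ι a) hK
      (fun x hx y hy => by
        obtain ⟨z, hz, rfl⟩ := exists_eq_coe_of_mem_closedBall hε hx
        obtain ⟨w, hw, rfl⟩ := exists_eq_coe_of_mem_closedBall hε hy
        rw [hGι, hGι]
        exact hG z hz w hw)
      (by rwa [hGι])
  obtain ⟨b, hb, rfl⟩ := exists_eq_coe_of_mem_closedBall hε hx
  exact ⟨b, ⟨hb, hGι b ▸ hGx⟩, fun w ⟨hw, hGw⟩ =>
    hι (huniq (ι w) ⟨hw, (hGι w).symm ▸ hGw⟩)⟩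

theorem exists_unique_zero_mem_closedBall_of_norm_sub_sub_mulVec_le [DecidableEq n]
    (F : (n → ℤ_[p]) → n → ℤ_[p]) (J : Matrix n n ℤ_[p]) (hJ : J.det ≠ 0) (a : n → ℤ_[p])
    {ε : ℝ} (hε : ε ≤ 1) {K : ℝ≥0} (hK : K < 1)
    (hF : ∀ x ∈ closedBall a ε, ∀ y ∈ closedBall a ε,
      ‖F x - F y - J *ᵥ (x - y)‖ ≤ K * ‖J.det‖ * ‖x - y‖)
    (hFa : ‖F a‖ ≤ ‖J.det‖ * ε) :
    ∃! b, b ∈ closedBall a ε ∧ F b = 0 := by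
  have hdet_coe : (J.det : ℚ_[p]) ≠ 0 := fun h => hJ (Subtype.ext h)
  -- `N = J⁻¹ = (det J)⁻¹ adj J`, with values in `ℚ_pⁿ`.
  let N : (n → ℤ_[p]) → n → ℚ_[p] := fun v i => (J.det : ℚ_[p])⁻¹ * (J.adjugate *ᵥ v) i
  have hN : ∀ v, ‖N v‖ ≤ ‖J.det‖⁻¹ * ‖v‖ := fun v => by
    rw [show N v = (J.det : ℚ_[p])⁻¹ • fun i => ((J.adjugate *ᵥ v) i : ℚ_[p]) from rfl, norm_smul,
      norm_inv, ← norm_def]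
    exact mul_le_mul_of_nonneg_left (norm_mulVec_le _ _) (by positivity)
  have hNF : ∀ z w, N (F z) - N (F w) - (fun i => ((z - w) i : ℚ_[p]))
      = N (F z - F w - J *ᵥ (z - w)) := fun z w => by
    ext i
    simp only [N, mulVec_sub, adjugate_mulVec_mulVec, Pi.sub_apply, Pi.smul_apply, smul_eq_mul,
      PadicInt.coe_sub, PadicInt.coe_mul]
    field_simp
  have hzero : ∀ z, N (F z) = 0 ↔ F z = 0 := fun z => by
    rw [← adjugate_mulVec_eq_zero_iff hJ, funext_iff, funext_iff]
    simp [N, hdet_coe]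
  have hbound : ∀ x ∈ closedBall a ε, ∀ y ∈ closedBall a ε,
      ‖N (F x) - N (F y) - fun i => ((x - y) i : ℚ_[p])‖ ≤ K * ‖x - y‖ := fun x hx y hy =>
    calc _ ≤ ‖J.det‖⁻¹ * ‖F x - F y - J *ᵥ (x - y)‖ := hNF x y ▸ hN _
      _ ≤ ‖J.det‖⁻¹ * (K * ‖J.det‖ * ‖x - y‖) := by gcongr; exact hF x hx y hy
      _ = K * ‖x - y‖ := by field_simp
  have hNa : ‖N (F a)‖ ≤ ε :=
    calc _ ≤ ‖J.det‖⁻¹ * ‖F a‖ := hN _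
      _ ≤ ‖J.det‖⁻¹ * (‖J.det‖ * ε) := by gcongr
      _ = ε := by field_simp
  simpa only [hzero] using
    exists_unique_zero_mem_closedBall_of_norm_sub_sub_coe_le _ a hε hK hbound hNa

end PadicInt

/-- Multivariate analytic Hensel's lemma: for a system `f = (f₁, …, f_t)` of restricted
power series with `det J_f(a) ≠ 0` and `v(fᵢ(a)) > 2 v(det J_f(a)) + r` (stated via
norms), there is a unique `b` with `f(b) = 0` and `v(bᵢ − aᵢ) > v(det J_f(a)) + r`. -/
theorem multivariate_analytic_hensel (p : ℕ) [Fact p.Prime] (t : ℕ)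
    (f : Fin t → MvPowerSeries (Fin t) ℤ_[p])
    (hres : ∀ i, Filter.Tendsto (fun d : Fin t →₀ ℕ => ‖MvPowerSeries.coeff d (f i)‖)
      Filter.cofinite (nhds 0))
    (r : ℕ) (a : Fin t → ℤ_[p])
    (hJ : (Matrix.of fun i j => mvSeriesEval p (mvSeriesPDeriv p j (f i)) a).det ≠ 0)
    (hval : ∀ i, ‖mvSeriesEval p (f i) a‖ <
      ‖(Matrix.of fun i j => mvSeriesEval p (mvSeriesPDeriv p j (f i)) a).det‖ ^ 2 *
        (p : ℝ) ^ (-(r : ℤ))) :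
    ∃! b : Fin t → ℤ_[p], (∀ i, mvSeriesEval p (f i) b = 0) ∧
      ∀ i, ‖b i - a i‖ <
        ‖(Matrix.of fun i j => mvSeriesEval p (mvSeriesPDeriv p j (f i)) a).det‖ *
          (p : ℝ) ^ (-(r : ℤ)) := by
  set δ := (Matrix.of fun i j => mvSeriesEval p (mvSeriesPDeriv p j (f i)) a).det
  have hp : (1 : ℝ) < p := mod_cast (Fact.out : p.Prime).one_lt
  set K : ℝ≥0 := (p : ℝ≥0) ^ (-(r : ℤ) - 1)
  have hK : (K : ℝ) = (p : ℝ) ^ (-(r : ℤ) - 1) := by simp [K]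
  have hK1 : K < 1 := by
    rw [← NNReal.coe_lt_coe, hK, NNReal.coe_one]
    exact zpow_lt_one_of_neg₀ hp (by omega)
  set ε := ‖δ‖ * K
  have hε0 : 0 ≤ ε := by positivity
  have hε1 : ε ≤ 1 := mul_le_one₀ (PadicInt.norm_le_one δ) K.2 (mod_cast hK1.le)
  have hFa : ‖fun i => mvSeriesEval p (f i) a‖ ≤ ‖δ‖ * ε :=
    (pi_norm_le_iff_of_nonneg (by positivity)).2 fun i => by
      have := (PadicInt.norm_lt_norm_mul_zpow_iff (pow_ne_zero 2 hJ) _).1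
        ((norm_pow δ 2).symm ▸ hval i)
      rwa [norm_pow, ← hK, pow_two, mul_assoc] at this
  have hF : ∀ x ∈ closedBall a ε, ∀ y ∈ closedBall a ε,
      ‖(fun i => mvSeriesEval p (f i) x) - (fun i => mvSeriesEval p (f i) y)
        - (Matrix.of fun i j => mvSeriesEval p (mvSeriesPDeriv p j (f i)) a) *ᵥ (x - y)‖
        ≤ K * ‖δ‖ * ‖x - y‖ := fun x hx y hy => by
    rw [mem_closedBall, dist_eq_norm] at hx hy
    calc _ ≤ max ‖x - a‖ ‖y - a‖ * ‖x - y‖ := norm_mvSeriesEval_sub_sub_mulVec_le hres a x y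
      _ ≤ K * ‖δ‖ * ‖x - y‖ := by rw [mul_comm (K : ℝ)]; gcongr; exact max_le hx hy
  refine (existsUnique_congr fun b => ?_).1
    (PadicInt.exists_unique_zero_mem_closedBall_of_norm_sub_sub_mulVec_le _ _ hJ a hε1 hK1 hF hFa)
  rw [mem_closedBall, dist_eq_norm, pi_norm_le_iff_of_nonneg hε0, funext_iff, and_comm]
  refine and_congr Iff.rfl (forall_congr' fun i => ?_)
  rw [PadicInt.norm_lt_norm_mul_zpow_iff hJ, ← hK]
  rfl
end
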